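/- Let $R$ be a commutative ring, $g \ge 1$ a natural number, and $x_1, \ldots, x_m \in R$ elements such that any product of $g$ of them (with repetition) in which some $x_i$ occurs at least three times is zero. Then $(x_1 + \cdots + x_m)^g$ is divisible in $R$ (as an integer multiple of some element) by $g!/2^{\lfloor g/2 \rfloor}$; that is, there exists $z \in R$ with $(x_1 + \cdots + x_m)^g = (g!/2^{\lfloor g/2 \rfloor}) \cdot z$. -/
import Mathlib

/-- `2^(n/2)` divides `n!`. -/
lemma two_pow_half_dvd_factorial : ∀ n : ℕ, 2 ^ (n / 2) ∣ n.factorial := by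
  intro n
  induction n using Nat.strong_induction_on with
  | _ n ih =>
    match n with
    | 0 => simp
    | 1 => simp
    | (n + 2) =>
      have h1 : (n + 2) / 2 = n / 2 + 1 := by omega
      have h2 : (n + 2).factorial = n.factorial * ((n + 1) * (n + 2)) := by
        rw [Nat.factorial_succ, Nat.factorial_succ]; ring
      rw [h1, h2, pow_succ]
      exact mul_dvd_mul (ih n (by omega)) (Nat.even_mul_succ_self (n + 1)).two_dvd

/-- If `x₁, …, x_m` are elements of a commutative ring such that every product of `g`
of them in which some element occurs at least three times vanishes, then
`(x₁ + ⋯ + x_m)^g` is divisible by `g! / 2^⌊g/2⌋`. -/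
theorem sum_pow_divisible_of_cube_vanish {R : Type*} [CommRing R] (g m : ℕ) (hg : 1 ≤ g)
    (x : Fin m → R)
    (hvan : ∀ f : Fin g → Fin m,
      (∃ i : Fin m, 3 ≤ (Finset.univ.filter fun t => f t = i).card) →
      (∏ t : Fin g, x (f t)) = 0) :
    ∃ z : R, (∑ i : Fin m, x i) ^ g = (Nat.factorial g / 2 ^ (g / 2) : ℕ) • z := by
  classical
  set N := Nat.factorial g / 2 ^ (g / 2) with hN
  have hNg : N * 2 ^ (g / 2) = g.factorial :=
    Nat.div_mul_cancel (two_pow_half_dvd_factorial g)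
  -- Vanishing of products with a high power
  have hbad : ∀ k : Fin m → ℕ, (∑ i, k i) = g → (∃ i, 3 ≤ k i) →
      (∏ i, x i ^ k i) = 0 := by
    rintro k hk ⟨i0, hi0⟩
    have hcard : Fintype.card (Σ j : Fin m, Fin (k j)) = g := by
      simp [Fintype.card_sigma, hk]
    let e := Fintype.equivFinOfCardEq hcard
    have h1 : ∀ i, (Finset.univ.filter fun t => (e.symm t).1 = i).card = k i := by
      intro i
      rw [Finset.card_filter]
      rw [← Equiv.sum_comp e (fun t => if (e.symm t).1 = i then 1 else 0)]
      simp only [Equiv.symm_apply_apply]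
      rw [← Finset.univ_sigma_univ, Finset.sum_sigma]
      simp [Finset.filter_eq', apply_ite Finset.card, Finset.sum_ite_eq]
    have h2 : (∏ t : Fin g, x ((e.symm t).1)) = 0 := by
      apply hvan
      exact ⟨i0, by rw [h1]; exact hi0⟩
    calc (∏ i, x i ^ k i) = ∏ s : Σ j : Fin m, Fin (k j), x s.1 := by
          rw [← Finset.univ_sigma_univ, Finset.prod_sigma]
          simp
      _ = ∏ t : Fin g, x ((e.symm t).1) := (Equiv.prod_comp e.symm (fun s => x s.1)).symm
      _ = 0 := h2
  -- Divisibility of multinomial coefficients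
  have hgood : ∀ k : Fin m → ℕ, (∑ i, k i) = g → (∀ i, k i ≤ 2) →
      N ∣ Nat.multinomial Finset.univ k := by
    intro k hk hle
    set t := (Finset.univ.filter fun i => k i = 2).card with htdef
    have hprod : (∏ i, (k i).factorial) = 2 ^ t := by
      rw [← Finset.prod_filter_mul_prod_filter_not Finset.univ (fun i => k i = 2)]
      have e1 : (∏ i ∈ Finset.univ.filter fun i => k i = 2, (k i).factorial) = 2 ^ t := by
        rw [Finset.prod_congr rfl (fun i hi => ?_)]
        · rw [Finset.prod_const, htdef]
        · rw [(Finset.mem_filter.mp hi).2]; rfl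
      have e2 : (∏ i ∈ Finset.univ.filter fun i => ¬ k i = 2, (k i).factorial) = 1 := by
        apply Finset.prod_eq_one
        intro i hi
        have := hle i
        have h2 := (Finset.mem_filter.mp hi).2
        interval_cases h : k i <;> simp_all [Nat.factorial]
      rw [e1, e2, mul_one]
    have ht : t ≤ g / 2 := by
      have : t * 2 ≤ g := by
        calc t * 2 = ∑ _i ∈ Finset.univ.filter fun i => k i = 2, 2 := by
              rw [Finset.sum_const, smul_eq_mul, mul_comm]
          _ ≤ ∑ i ∈ Finset.univ.filter fun i => k i = 2, k i :=
              Finset.sum_le_sum (fun i hi => by rw [(Finset.mem_filter.mp hi).2])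
          _ ≤ ∑ i, k i := Finset.sum_le_sum_of_subset (Finset.filter_subset _ _)
          _ = g := hk
      omega
    have hms : Nat.multinomial Finset.univ k * 2 ^ t = g.factorial := by
      rw [← hprod, mul_comm, Nat.multinomial_spec, hk]
    refine ⟨2 ^ (g / 2 - t), ?_⟩
    have hpow : (2 : ℕ) ^ (g / 2) = 2 ^ (g / 2 - t) * 2 ^ t := by
      rw [← pow_add]; congr 1; omega
    apply Nat.eq_of_mul_eq_mul_right (pow_pos (by norm_num : (0:ℕ) < 2) t)
    rw [hms, mul_assoc, ← hpow, hNg]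
  -- Expand using the multinomial theorem
  rw [Finset.sum_pow_eq_sum_piAntidiag]
  rw [← Finset.sum_filter_add_sum_filter_not (Finset.piAntidiag Finset.univ g)
      (fun k => ∀ i, k i ≤ 2)]
  have hzero : (∑ k ∈ (Finset.piAntidiag Finset.univ g).filter
      (fun k => ¬ ∀ i, k i ≤ 2),
      (Nat.multinomial Finset.univ k : R) * ∏ i, x i ^ k i) = 0 := by
    apply Finset.sum_eq_zero
    intro k hk
    rw [Finset.mem_filter] at hk
    obtain ⟨hk1, hk2⟩ := hk
    have hsum : (∑ i, k i) = g := (Finset.mem_piAntidiag.mp hk1).1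
    push_neg at hk2
    obtain ⟨i, hi⟩ := hk2
    rw [hbad k hsum ⟨i, by omega⟩, mul_zero]
  rw [hzero, add_zero]
  refine ⟨∑ k ∈ (Finset.piAntidiag Finset.univ g).filter (fun k => ∀ i, k i ≤ 2),
    ((Nat.multinomial Finset.univ k / N : ℕ) : R) * ∏ i, x i ^ k i, ?_⟩
  rw [Finset.smul_sum]
  apply Finset.sum_congr rfl
  intro k hk
  rw [Finset.mem_filter] at hk
  have hdvd : N ∣ Nat.multinomial Finset.univ k :=
    hgood k (Finset.mem_piAntidiag.mp hk.1).1 hk.2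
  rw [nsmul_eq_mul, ← mul_assoc, ← Nat.cast_mul, Nat.mul_div_cancel' hdvd]
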